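/- Let s > 1 be real, set l = √(s² − 1), θ = π − arctan l, and α = π − 2·arctan l. Define f(z) = (l + z)/(l − z), g(z) = exp((π/θ)·Log z) − 1 (principal branch), and let x + iy = e^{iπα/θ} − 1 with x, y real, and ψ(z) = y·z/(x² + y² − x·z). Then the composition φ_s = ψ ∘ g ∘ f is a holomorphic bijection from the domain D_s = {z ∈ ℂ : Im z > 0 and |z − i| < s} onto the upper half-plane ℍ, with φ_s(0) = 0 and φ_s(i) = i. -/

import Mathlib

/-!
The map is a chain of conformal bijections. The circle `|z - i| = s` meets `ℝ` at `±l`, so the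
real Möbius map `f`, which preserves `ℍ`, sends `D_s` onto the sector `0 < arg w < θ` cut out
by the line `l * Re w + Im w = 0`. The power `w ↦ w ^ (π / θ)` opens this sector onto `ℍ`, and
both the translation by `-1` and `ψ` are real Möbius maps of positive determinant, hence
automorphisms of `ℍ`. For the normalisation, `f i = exp (i α)`, so `g (f i) = x + i y`, which
`ψ` sends to `i`.
-/

open Complex Set

local notation "ℍₒ" => UpperHalfPlane.upperHalfPlaneSet

noncomputable def moebius (a b c d : ℝ) (z : ℂ) : ℂ := (a * z + b) / (c * z + d)

section Moebius

variable {a b c d : ℝ}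

lemma im_moebius (a b c d : ℝ) (z : ℂ) :
    (moebius a b c d z).im = (a * d - b * c) * z.im / normSq (c * z + d) := by
  simp only [moebius, div_im, normSq_apply]
  simp only [add_im, mul_im, ofReal_re, ofReal_im, zero_mul, add_zero, add_re, mul_re, sub_zero]
  ring

lemma moebius_denom_ne_zero (h : 0 < a * d - b * c) {z : ℂ} (hz : z ∈ ℍₒ) :
    (c : ℂ) * z + d ≠ 0 := by
  intro h0
  have him : c * z.im = 0 := by simpa using congrArg im h0
  have hc : c = 0 := (mul_eq_zero.mp him).resolve_right hz.ne'
  have hd : d = 0 := by simpa [hc] using congrArg re h0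
  simp [hc, hd] at h

lemma mapsTo_moebius (h : 0 < a * d - b * c) :
    MapsTo (moebius a b c d) ℍₒ ℍₒ := fun z hz => by
  rw [mem_ofPred_eq, im_moebius]
  exact div_pos (mul_pos h hz) (normSq_pos.mpr (moebius_denom_ne_zero h hz))

lemma moebius_moebius_adjugate (h : 0 < a * d - b * c) {z : ℂ} (hz : z ∈ ℍₒ) :
    moebius a b c d (moebius d (-b) (-c) a z) = z := by
  have hden : (a : ℂ) - c * z ≠ 0 := by
    simpa [sub_eq_neg_add] using
      moebius_denom_ne_zero (a := d) (b := -b) (c := -c) (d := a) (by linarith) hz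
  have hdet : (a * d - b * c : ℂ) ≠ 0 := by exact_mod_cast h.ne'
  have hinv : moebius d (-b) (-c) a z = (d * z - b) / (a - c * z) := by
    simp only [moebius]; push_cast; ring
  have hnum : (a : ℂ) * ((d * z - b) / (a - c * z)) + b = (a * d - b * c) * z / (a - c * z) := by
    rw [mul_div_assoc', div_add' _ _ _ hden]
    ring
  have hcd : (c : ℂ) * ((d * z - b) / (a - c * z)) + d = (a * d - b * c) / (a - c * z) := by
    rw [mul_div_assoc', div_add' _ _ _ hden]
    ring
  rw [hinv, moebius, hnum, hcd, div_div_div_cancel_right₀ hden, mul_div_cancel_left₀ _ hdet]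

lemma bijOn_moebius (h : 0 < a * d - b * c) : BijOn (moebius a b c d) ℍₒ ℍₒ := by
  have h' : 0 < d * a - -b * -c := by linarith
  refine InvOn.bijOn ⟨fun z hz => ?_, fun z hz => moebius_moebius_adjugate h hz⟩
    (mapsTo_moebius h) (mapsTo_moebius h')
  simpa using moebius_moebius_adjugate h' hz

lemma differentiableOn_moebius (h : 0 < a * d - b * c) :
    DifferentiableOn ℂ (moebius a b c d) ℍₒ := fun z hz => by
  apply DifferentiableAt.differentiableWithinAt
  exact DifferentiableAt.div (d := fun w => (c : ℂ) * w + d) (by fun_prop) (by fun_prop)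
    (moebius_denom_ne_zero h hz)

end Moebius

noncomputable def sector (θ : ℝ) : Set ℂ := {w | 0 < w.arg ∧ w.arg < θ}

lemma arg_pos_of_im_pos {w : ℂ} (hw : 0 < w.im) : 0 < w.arg :=
  (arg_nonneg_iff.mpr hw.le).lt_of_ne fun h => hw.ne' (arg_eq_zero_iff.mp h.symm).2

lemma sector_pi : sector Real.pi = ℍₒ := by
  ext w
  refine ⟨fun ⟨hpos, hlt⟩ => ?_,
    fun hw => ⟨arg_pos_of_im_pos hw, arg_lt_pi_iff.mpr (Or.inr hw.ne')⟩⟩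
  refine (arg_nonneg_iff.mp hpos.le).lt_of_ne fun him => ?_
  have hre : 0 ≤ w.re := (arg_lt_pi_iff.mp hlt).resolve_right (not_not.mpr him.symm)
  exact hpos.ne' (arg_eq_zero_iff.mpr ⟨hre, him.symm⟩)

lemma sector_subset_sector {θ θ' : ℝ} (h : θ ≤ θ') : sector θ ⊆ sector θ' :=
  fun _ hw => ⟨hw.1, hw.2.trans_le h⟩

lemma sector_subset_slitPlane {θ : ℝ} (hθ : θ ≤ Real.pi) :
    sector θ ⊆ slitPlane := fun w hw =>
  mem_slitPlane_iff.mpr (Or.inr (sector_pi ▸ sector_subset_sector hθ hw : w ∈ ℍₒ).ne')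

lemma arg_lt_iff_of_im_pos {w : ℂ} (hw : 0 < w.im) {θ : ℝ} (h0 : 0 ≤ θ)
    (hπ : θ ≤ Real.pi) :
    w.arg < θ ↔ 0 < Real.sin θ * w.re - Real.cos θ * w.im := by
  have hw0 : w ≠ 0 := fun h => by simp [h] at hw
  have hrot : w * exp ((-θ : ℝ) * I)
      = ‖w‖ * (cos (w.arg - θ : ℝ) + sin (w.arg - θ : ℝ) * I) := by
    nth_rewrite 1 [← norm_mul_exp_arg_mul_I w]
    rw [← exp_mul_I, mul_assoc, ← exp_add]
    push_cast
    ring_nf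
  have harg : (w * exp ((-θ : ℝ) * I)).arg = w.arg - θ := by
    rw [hrot, arg_mul_cos_add_sin_mul_I (norm_pos_iff.mpr hw0)]
    have := arg_pos_of_im_pos hw
    have := arg_lt_pi_iff.mpr (Or.inr hw.ne')
    constructor <;> linarith
  have him : (w * exp ((-θ : ℝ) * I)).im = -(Real.sin θ * w.re - Real.cos θ * w.im) := by
    rw [mul_im, exp_ofReal_mul_I_re, exp_ofReal_mul_I_im, Real.cos_neg, Real.sin_neg]
    ring
  rw [← sub_neg, ← harg, arg_neg_iff, him, neg_lt_zero]

section Power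

variable {c θ : ℝ}

lemma log_exp_mul_log (hc : 0 < c) (hcθ : c * θ ≤ Real.pi) {w : ℂ} (hw : w ∈ sector θ) :
    log (exp (c * log w)) = c * log w := by
  have him : (c * log w).im = c * w.arg := by rw [im_ofReal_mul, log_im]
  have hpos : 0 < c * w.arg := mul_pos hc hw.1
  have hlt : c * w.arg < c * θ := mul_lt_mul_of_pos_left hw.2 hc
  exact log_exp (by rw [him]; linarith [Real.pi_pos]) (by rw [him]; linarith)

lemma mapsTo_exp_mul_log_sector (hc : 0 < c) (hcθ : c * θ ≤ Real.pi) :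
    MapsTo (fun w => exp (c * log w)) (sector θ) (sector (c * θ)) := fun w hw => by
  have harg : (exp (c * log w)).arg = c * w.arg := by
    rw [← log_im, log_exp_mul_log hc hcθ hw, im_ofReal_mul, log_im]
  exact ⟨harg ▸ mul_pos hc hw.1, harg ▸ mul_lt_mul_of_pos_left hw.2 hc⟩

lemma exp_mul_log_exp_mul_log (hc : 0 < c) (hcθ : c * θ ≤ Real.pi) {c' : ℝ} (hc' : c' * c = 1)
    {w : ℂ} (hw : w ∈ sector θ) : exp (c' * log (exp (c * log w))) = w := by
  have hw0 : w ≠ 0 := fun h => by simp [h, sector] at hw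
  rw [log_exp_mul_log hc hcθ hw, ← mul_assoc, ← ofReal_mul, hc', ofReal_one, one_mul,
    exp_log hw0]

lemma bijOn_exp_mul_log_sector (hc : 0 < c) (hθ : θ ≤ Real.pi) (hcθ : c * θ ≤ Real.pi) :
    BijOn (fun w => exp (c * log w)) (sector θ) (sector (c * θ)) := by
  have hcinv : c⁻¹ * (c * θ) = θ := inv_mul_cancel_left₀ hc.ne' θ
  have hback := mapsTo_exp_mul_log_sector (inv_pos.mpr hc) (hcinv.symm ▸ hθ)
  rw [hcinv] at hback
  exact InvOn.bijOn
    ⟨fun w hw => exp_mul_log_exp_mul_log hc hcθ (inv_mul_cancel₀ hc.ne') hw,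
     fun v hv => exp_mul_log_exp_mul_log (inv_pos.mpr hc) (hcinv.symm ▸ hθ)
       (mul_inv_cancel₀ hc.ne') hv⟩
    (mapsTo_exp_mul_log_sector hc hcθ) hback

lemma differentiableOn_exp_mul_log (c : ℂ) :
    DifferentiableOn ℂ (fun w => exp (c * log w)) slitPlane := fun _ hw =>
  ((differentiableAt_log hw).const_mul c).cexp.differentiableWithinAt

lemma bijOn_exp_mul_log_sub_one (hθ0 : 0 < θ) (hθπ : θ ≤ Real.pi) :
    BijOn (fun w => exp ((Real.pi / θ : ℝ) * log w) - 1) (sector θ) ℍₒ := by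
  have hcθ : Real.pi / θ * θ = Real.pi := div_mul_cancel₀ _ hθ0.ne'
  have hpow := bijOn_exp_mul_log_sector (div_pos Real.pi_pos hθ0) hθπ hcθ.le
  rw [hcθ, sector_pi] at hpow
  have hsub : (fun z : ℂ => z - 1) = moebius 1 (-1) 0 1 := by
    funext z
    simp only [moebius, ofReal_one, one_mul, ofReal_neg, ofReal_zero, zero_mul, zero_add, div_one]
    ring
  exact (hsub ▸ bijOn_moebius (by norm_num)).comp hpow

end Power

section Cayley

variable {l s : ℝ}

lemma norm_sub_I_lt_iff (hl : 0 < l) (hs : 0 < s) (hls : l ^ 2 + 1 = s ^ 2) {z : ℂ}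
    (hz : (l : ℂ) - z ≠ 0) :
    ‖z - I‖ < s ↔
      0 < l * (((l : ℂ) + z) / (l - z)).re + (((l : ℂ) + z) / (l - z)).im := by
  have hN : 0 < normSq ((l : ℂ) - z) := normSq_pos.mpr hz
  have key : l * (((l : ℂ) + z) / (l - z)).re + (((l : ℂ) + z) / (l - z)).im
      = l * (s ^ 2 - normSq (z - I)) / normSq ((l : ℂ) - z) := by
    rw [div_re, div_im, normSq_apply, normSq_apply, ← hls]
    simp only [add_re, add_im, sub_re, sub_im, ofReal_re, ofReal_im, I_re, I_im]
    field_simp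
    ring
  rw [key, div_pos_iff_of_pos_right hN, mul_pos_iff_of_pos_left hl, sub_pos, ← Complex.sq_norm,
    sq_lt_sq₀ (norm_nonneg _) hs.le]

lemma arg_lt_pi_sub_arctan_iff (hl : 0 ≤ l) {w : ℂ} (hw : 0 < w.im) :
    w.arg < Real.pi - Real.arctan l ↔ 0 < l * w.re + w.im := by
  have h0 : 0 ≤ Real.arctan l := Real.arctan_nonneg.mpr hl
  have h1 := Real.arctan_lt_pi_div_two l
  have hsq : 0 < √(1 + l ^ 2) := Real.sqrt_pos.mpr (by positivity)
  rw [arg_lt_iff_of_im_pos hw (by linarith [Real.pi_pos]) (by linarith), Real.sin_pi_sub,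
    Real.cos_pi_sub, Real.sin_arctan, Real.cos_arctan]
  rw [show l / √(1 + l ^ 2) * w.re - -(1 / √(1 + l ^ 2)) * w.im
      = (l * w.re + w.im) / √(1 + l ^ 2) by ring, div_pos_iff_of_pos_right hsq]

lemma cayley_eq_moebius (l : ℝ) : (fun z : ℂ => (l + z) / (l - z)) = moebius 1 l (-1) l := by
  funext z
  simp only [moebius]
  push_cast
  ring_nf

lemma bijOn_cayley_sector (hl : 0 < l) (hs : 0 < s) (hls : l ^ 2 + 1 = s ^ 2) :
    BijOn (fun z : ℂ => (l + z) / (l - z)) {z | 0 < z.im ∧ ‖z - I‖ < s}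
      (sector (Real.pi - Real.arctan l)) := by
  have hbij : BijOn (fun z : ℂ => (l + z) / (l - z)) ℍₒ ℍₒ :=
    cayley_eq_moebius l ▸ bijOn_moebius (by linarith)
  have hsub : sector (Real.pi - Real.arctan l) ⊆ ℍₒ :=
    sector_pi ▸ sector_subset_sector (by linarith [Real.arctan_nonneg.mpr hl.le])
  convert hbij.subset_right hsub using 1
  ext z
  refine and_congr_right fun hz => ?_
  have hfz : 0 < (((l : ℂ) + z) / (l - z)).im := hbij.mapsTo hz
  have hden : (l : ℂ) - z ≠ 0 := fun h => hz.ne' (by simpa using (congrArg im h).symm)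
  rw [norm_sub_I_lt_iff hl hs hls hden, ← arg_lt_pi_sub_arctan_iff hl.le hfz]
  exact ⟨fun h => ⟨arg_pos_of_im_pos hfz, h⟩, And.right⟩

end Cayley

lemma cayley_I (l : ℝ) :
    ((l : ℂ) + I) / (l - I) = exp ((Real.pi - 2 * Real.arctan l : ℝ) * I) := by
  have hl2 : 0 < 1 + l ^ 2 := by positivity
  have hcos2 : Real.cos (Real.arctan l) ^ 2 = 1 / (1 + l ^ 2) := Real.cos_sq_arctan l
  have hsincos : Real.sin (Real.arctan l) * Real.cos (Real.arctan l) = l / (1 + l ^ 2) := by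
    rw [← Real.tan_mul_cos (Real.cos_arctan_pos l).ne', Real.tan_arctan, mul_assoc, ← sq, hcos2]
    ring
  have hcos : Real.cos (Real.pi - 2 * Real.arctan l) = (l ^ 2 - 1) / (1 + l ^ 2) := by
    rw [Real.cos_pi_sub, Real.cos_two_mul, hcos2]
    field_simp
    ring
  have hsin : Real.sin (Real.pi - 2 * Real.arctan l) = 2 * l / (1 + l ^ 2) := by
    rw [Real.sin_pi_sub, Real.sin_two_mul, mul_assoc, hsincos]
    ring
  have hden : (l : ℂ) - I ≠ 0 := fun h => by simpa using congrArg im h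
  have hl2' : (1 + l ^ 2 : ℂ) ≠ 0 := by exact_mod_cast hl2.ne'
  rw [exp_mul_I, ← ofReal_cos, ← ofReal_sin, hcos, hsin, div_eq_iff hden]
  push_cast
  field_simp
  linear_combination (2 * l : ℂ) * I_sq

lemma moebius_eq_I {x y : ℝ} (hy : y ≠ 0) :
    moebius y 0 (-x) (x ^ 2 + y ^ 2) (x + y * I) = I := by
  have hden : ((-x : ℝ) : ℂ) * (x + y * I) + (x ^ 2 + y ^ 2 : ℝ) = y * (y - x * I) := by
    push_cast
    ring
  have hy' : (y : ℂ) - x * I ≠ 0 := fun h => hy (by simpa using congrArg re h)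
  rw [moebius, hden, div_eq_iff (mul_ne_zero (ofReal_ne_zero.mpr hy) hy')]
  push_cast
  linear_combination (x * y : ℂ) * I_sq

lemma im_pos_of_eq_exp_mul_I_sub_one {x y β : ℝ} (hβ0 : 0 < β) (hβπ : β < Real.pi)
    (h : (x : ℂ) + y * I = exp (β * I) - 1) : 0 < y := by
  have him := congrArg im h
  rw [sub_im, exp_ofReal_mul_I_im] at him
  have hy : y = Real.sin β := by simpa using him
  exact hy ▸ Real.sin_pos_of_pos_of_lt_pi hβ0 hβπ

/-- For real `s > 1`, with `l = √(s² − 1)`, `θ = π − arctan l`,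
`α = π − 2·arctan l`, `f(z) = (l + z)/(l − z)`,
`g(z) = exp((π/θ)·Log z) − 1`, `x + iy = e^{iπα/θ} − 1`, and
`ψ(z) = y·z/(x² + y² − x·z)`, the composition `φ_s = ψ ∘ g ∘ f` is a
holomorphic bijection from `{z : Im z > 0, |z − i| < s}` onto the upper
half-plane, with `φ_s(0) = 0` and `φ_s(i) = i`. -/
theorem stmt_12 (s l θ α x y : ℝ) (hs : 1 < s)
    (hl : l = Real.sqrt (s ^ 2 - 1))
    (hθ : θ = Real.pi - Real.arctan l)
    (hα : α = Real.pi - 2 * Real.arctan l)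
    (f g ψ : ℂ → ℂ)
    (hf : ∀ z : ℂ, f z = ((l : ℂ) + z) / ((l : ℂ) - z))
    (hg : ∀ z : ℂ, g z =
      Complex.exp (((Real.pi / θ : ℝ) : ℂ) * Complex.log z) - 1)
    (hxy : (x : ℂ) + (y : ℂ) * Complex.I =
      Complex.exp (((Real.pi * α / θ : ℝ) : ℂ) * Complex.I) - 1)
    (hψ : ∀ z : ℂ, ψ z =
      (y : ℂ) * z / ((x : ℂ) ^ 2 + (y : ℂ) ^ 2 - (x : ℂ) * z)) :
    DifferentiableOn ℂ (ψ ∘ g ∘ f)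
      {z : ℂ | 0 < z.im ∧ ‖z - Complex.I‖ < s} ∧
    Set.BijOn (ψ ∘ g ∘ f)
      {z : ℂ | 0 < z.im ∧ ‖z - Complex.I‖ < s}
      {z : ℂ | 0 < z.im} ∧
    (ψ ∘ g ∘ f) 0 = 0 ∧ (ψ ∘ g ∘ f) Complex.I = Complex.I := by
  have hl0 : 0 < l := hl ▸ Real.sqrt_pos.mpr (by nlinarith)
  have hls : l ^ 2 + 1 = s ^ 2 := by rw [hl, Real.sq_sqrt (by nlinarith)]; ring
  have harctan0 : 0 < Real.arctan l := Real.arctan_pos.mpr hl0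
  have harctan1 := Real.arctan_lt_pi_div_two l
  have hθ0 : 0 < θ := by linarith
  have hθπ : θ ≤ Real.pi := by linarith
  have hα0 : 0 < α := by linarith
  have hαθ : α < θ := by linarith
  have hy0 : 0 < y := im_pos_of_eq_exp_mul_I_sub_one (by positivity)
    (by rw [div_lt_iff₀ hθ0]; exact mul_lt_mul_of_pos_left hαθ Real.pi_pos) hxy
  obtain rfl : f = _ := funext hf
  obtain rfl : g = _ := funext hg
  obtain rfl : ψ = moebius y 0 (-x) (x ^ 2 + y ^ 2) := funext fun w => by
    simp only [hψ, moebius, ofReal_zero, add_zero, ofReal_neg, neg_mul, ofReal_add, ofReal_pow]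
    ring
  have hdetψ : 0 < y * (x ^ 2 + y ^ 2) - 0 * -x := by rw [zero_mul, sub_zero]; positivity
  have hbijf : BijOn _ {z | 0 < z.im ∧ ‖z - I‖ < s} (sector θ) :=
    hθ ▸ bijOn_cayley_sector hl0 (by linarith) hls
  have hbijg : BijOn _ (sector θ) ℍₒ := bijOn_exp_mul_log_sub_one hθ0 hθπ
  have hdf : DifferentiableOn ℂ (fun z : ℂ => (l + z) / (l - z))
      {z | 0 < z.im ∧ ‖z - I‖ < s} := by
    rw [cayley_eq_moebius]
    exact (differentiableOn_moebius (by linarith)).mono fun _ hz => hz.1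
  have hdg : DifferentiableOn ℂ _ (sector θ) :=
    ((differentiableOn_exp_mul_log ((Real.pi / θ : ℝ) : ℂ)).sub_const 1).mono
      (sector_subset_slitPlane hθπ)
  have hgfI : exp ((Real.pi / θ : ℝ) * log ((l + I) / (l - I))) - 1 = x + y * I := by
    have hαI : -Real.pi < (α * I : ℂ).im ∧ (α * I : ℂ).im ≤ Real.pi := by
      simp only [mul_im, ofReal_re, ofReal_im, I_re, I_im]; constructor <;> linarith
    rw [show ((l : ℂ) + I) / (l - I) = exp (α * I) by rw [hα, cayley_I], log_exp hαI.1 hαI.2,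
      hxy]
    push_cast
    ring_nf
  refine ⟨?_, ?_, ?_, ?_⟩
  · exact (differentiableOn_moebius hdetψ).comp (hdg.comp hdf hbijf.mapsTo)
      (hbijg.mapsTo.comp hbijf.mapsTo)
  · exact (bijOn_moebius hdetψ).comp (hbijg.comp hbijf)
  · simp [moebius, hl0.ne']
  · rw [Function.comp_apply, Function.comp_apply, hgfI, moebius_eq_I hy0.ne']
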